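/- arXiv:1809.10836 — 2 statements merged into one kernel-verified Lean document; each statement's English description precedes it below -/
import Mathlib

section
/- In B_4, if β, β', β'' are strongly quasipositive braids (possibly trivial), then the braid σ_{1,2}^{−1} β σ_{3,4} β' σ_{1,3} β'' σ_{2,4} is quasipositive. -/
/-- Relations for the braid group `Bₙ`: the generator `k : Fin (n-1)` represents `σ_{k+1}`,
and we impose `σ_i σ_j = σ_j σ_i` for `|i - j| > 1` and `σ_i σ_{i+1} σ_i = σ_{i+1} σ_i σ_{i+1}`. -/
def braidRels (n : ℕ) : Set (FreeGroup (Fin (n - 1))) :=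
  {r | ∃ i j : Fin (n - 1), (i : ℕ) + 1 < (j : ℕ) ∧
      r = FreeGroup.of i * FreeGroup.of j * (FreeGroup.of i)⁻¹ * (FreeGroup.of j)⁻¹} ∪
  {r | ∃ i j : Fin (n - 1), (j : ℕ) = (i : ℕ) + 1 ∧
      r = FreeGroup.of i * FreeGroup.of j * FreeGroup.of i *
          (FreeGroup.of j * FreeGroup.of i * FreeGroup.of j)⁻¹}

/-- The braid group on `n` strands, presented with generators `σ_1, …, σ_{n-1}`. -/
abbrev BraidGroup (n : ℕ) : Type := PresentedGroup (braidRels n)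

/-- The standard generator `σ_i` of `Bₙ`, for `1 ≤ i ≤ n - 1` (junk value `1` otherwise). -/
def sigma (n i : ℕ) : BraidGroup n :=
  if h : 1 ≤ i ∧ i ≤ n - 1 then PresentedGroup.of ⟨i - 1, by omega⟩ else 1

/-- The word `σ_{j-1} σ_{j-2} ⋯ σ_{i+1}`. -/
def bandConj (n i j : ℕ) : BraidGroup n :=
  ((List.range (j - 1 - i)).map fun t => sigma n (j - 1 - t)).prod

/-- The band generator `σ_{i,j} = (σ_{j-1} σ_{j-2} ⋯ σ_{i+1}) σ_i (σ_{j-1} σ_{j-2} ⋯ σ_{i+1})⁻¹`.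
In particular `σ_{i,i+1} = σ_i`. -/
def band (n i j : ℕ) : BraidGroup n :=
  bandConj n i j * sigma n i * (bandConj n i j)⁻¹

/-- The set of band generators `σ_{i,j}`, `1 ≤ i < j ≤ n`, of `Bₙ`. -/
def bandGens (n : ℕ) : Set (BraidGroup n) :=
  {x | ∃ i j : ℕ, 1 ≤ i ∧ i < j ∧ j ≤ n ∧ x = band n i j}

/-- A braid is strongly quasipositive if it is a product of band generators, i.e. lies in the
submonoid generated by the `σ_{i,j}`, `1 ≤ i < j ≤ n`. -/
def StronglyQuasipositive (n : ℕ) (x : BraidGroup n) : Prop :=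
  x ∈ Submonoid.closure (bandGens n)

/-- A braid is quasipositive if it lies in the submonoid generated by all conjugates
`α σ_k α⁻¹` of the standard generators. -/
def Quasipositive (n : ℕ) (x : BraidGroup n) : Prop :=
  x ∈ Submonoid.closure
    {x : BraidGroup n | ∃ (α : BraidGroup n) (k : ℕ), 1 ≤ k ∧ k ≤ n - 1 ∧ x = α * sigma n k * α⁻¹}

/-!
The only negative letter is `σ_{1,2}⁻¹ = σ₁⁻¹`. The braid relations give `σ₁ σ₃ = σ₃ σ₁`,
`σ_{1,3} σ₂ = σ₁ σ_{1,3}` and `σ_{2,4} σ₃ = σ₂ σ_{2,4}`, which move letters past the bands so that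
the braid becomes the conjugate by `σ₃` of
`(σ₁⁻¹ (σ₃⁻¹ β σ₃ β') σ₁) σ_{1,3} (σ₂⁻¹ β'' σ₂) σ_{2,4}`.
Each factor is a conjugate of a quasipositive braid, and quasipositive braids form a submonoid
stable under conjugation.
-/

section Relations

variable {n : ℕ}

lemma sigma_eq_of {i : ℕ} (h1 : 1 ≤ i) (h2 : i ≤ n - 1) :
    sigma n i = PresentedGroup.of ⟨i - 1, by omega⟩ := by
  rw [sigma, dif_pos ⟨h1, h2⟩]

lemma sigma_mul_sigma_comm {i j : ℕ} (hi : 1 ≤ i) (hij : i + 1 < j) (hj : j ≤ n - 1) :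
    sigma n i * sigma n j = sigma n j * sigma n i := by
  rw [sigma_eq_of hi (by omega), sigma_eq_of (by omega) hj]
  refine commutatorElement_eq_one_iff_mul_comm.mp
    (PresentedGroup.one_of_mem (Or.inl ⟨_, _, ?_, rfl⟩))
  dsimp only
  omega

lemma sigma_mul_sigma_mul_sigma {i : ℕ} (hi : 1 ≤ i) (hi' : i + 1 ≤ n - 1) :
    sigma n i * sigma n (i + 1) * sigma n i = sigma n (i + 1) * sigma n i * sigma n (i + 1) := by
  rw [sigma_eq_of hi (by omega), sigma_eq_of (by omega) hi']
  refine mul_inv_eq_one.mp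
    (PresentedGroup.one_of_mem (Or.inr ⟨_, _, ?_, rfl⟩))
  dsimp only
  omega

lemma band_succ (i : ℕ) : band n i (i + 1) = sigma n i := by
  simp [band, bandConj]

lemma band_add_two (i : ℕ) :
    band n i (i + 2) = sigma n (i + 1) * sigma n i * (sigma n (i + 1))⁻¹ := by
  simp [band, bandConj]

/-- Both sides equal `σ_{i+1} σ_i`. -/
lemma band_add_two_mul_sigma {i : ℕ} (hi : 1 ≤ i) (hi' : i + 1 ≤ n - 1) :
    band n i (i + 2) * sigma n (i + 1) = sigma n i * band n i (i + 2) := by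
  rw [band_add_two, inv_mul_cancel_right, ← mul_assoc, ← mul_assoc,
    sigma_mul_sigma_mul_sigma hi hi', mul_inv_cancel_right]

end Relations

namespace Quasipositive

variable {n : ℕ} {x y : BraidGroup n}

lemma mul (hx : Quasipositive n x) (hy : Quasipositive n y) : Quasipositive n (x * y) :=
  Submonoid.mul_mem _ hx hy

lemma conj (g : BraidGroup n) (hx : Quasipositive n x) : Quasipositive n (g * x * g⁻¹) := by
  induction hx using Submonoid.closure_induction with
  | one => rw [mul_one, mul_inv_cancel]; exact Submonoid.one_mem _
  | mul x y _ _ hx hy =>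
      rw [show g * (x * y) * g⁻¹ = (g * x * g⁻¹) * (g * y * g⁻¹) by group]
      exact hx.mul hy
  | mem x hx =>
      obtain ⟨α, k, hk, hk', rfl⟩ := hx
      exact Submonoid.subset_closure ⟨g * α, k, hk, hk', by group⟩

lemma inv_conj (g : BraidGroup n) (hx : Quasipositive n x) : Quasipositive n (g⁻¹ * x * g) := by
  simpa using hx.conj g⁻¹

end Quasipositive

lemma quasipositive_band {n i j : ℕ} (hi : 1 ≤ i) (hij : i < j) (hj : j ≤ n) :
    Quasipositive n (band n i j) :=
  Submonoid.subset_closure ⟨bandConj n i j, i, hi, by omega, rfl⟩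

lemma StronglyQuasipositive.quasipositive {n : ℕ} {x : BraidGroup n}
    (hx : StronglyQuasipositive n x) : Quasipositive n x := by
  refine Submonoid.closure_le.mpr ?_ hx
  rintro _ ⟨i, j, hi, hij, hj, rfl⟩
  exact quasipositive_band hi hij hj

/-- In `B₄`, for strongly quasipositive `β, β', β''`, the braid
`σ_{1,2}⁻¹ β σ_{3,4} β' σ_{1,3} β'' σ_{2,4}` is quasipositive. -/
theorem claim_R_case1 (β β' β'' : BraidGroup 4)
    (hβ : StronglyQuasipositive 4 β) (hβ' : StronglyQuasipositive 4 β')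
    (hβ'' : StronglyQuasipositive 4 β'') :
    Quasipositive 4
      ((band 4 1 2)⁻¹ * β * band 4 3 4 * β' * band 4 1 3 * β'' * band 4 2 4) := by
  have e12 : band 4 1 2 = sigma 4 1 := band_succ 1
  have e34 : band 4 3 4 = sigma 4 3 := band_succ 3
  have h31 : sigma 4 3 * (sigma 4 1)⁻¹ * (sigma 4 3)⁻¹ = (sigma 4 1)⁻¹ := by
    rw [mul_inv_eq_iff_eq_mul, ← (Commute.inv_left _).eq]
    exact sigma_mul_sigma_comm le_rfl (by norm_num) le_rfl
  have h13 : sigma 4 1 * band 4 1 3 * (sigma 4 2)⁻¹ = band 4 1 3 :=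
    mul_inv_eq_of_eq_mul (band_add_two_mul_sigma (i := 1) le_rfl (by norm_num)).symm
  have h24 : sigma 4 2 * band 4 2 4 * (sigma 4 3)⁻¹ = band 4 2 4 :=
    mul_inv_eq_of_eq_mul (band_add_two_mul_sigma (i := 2) (by norm_num) (by norm_num)).symm
  have key : (band 4 1 2)⁻¹ * β * band 4 3 4 * β' * band 4 1 3 * β'' * band 4 2 4 =
      sigma 4 3 * (((sigma 4 1)⁻¹ * ((sigma 4 3)⁻¹ * β * sigma 4 3 * β') * sigma 4 1) *
        band 4 1 3 * ((sigma 4 2)⁻¹ * β'' * sigma 4 2) * band 4 2 4) * (sigma 4 3)⁻¹ := by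
    calc _ = sigma 4 3 * (sigma 4 1)⁻¹ * (sigma 4 3)⁻¹ * β * sigma 4 3 * β' *
            (sigma 4 1 * band 4 1 3 * (sigma 4 2)⁻¹) * β'' *
            (sigma 4 2 * band 4 2 4 * (sigma 4 3)⁻¹) := by
          rw [e12, e34, h31, h13, h24]
      _ = _ := by group
  rw [key]
  refine .conj _ (.mul (.mul (.mul ?_ ?_) ?_) ?_)
  · exact ((hβ.quasipositive.inv_conj (sigma 4 3)).mul hβ'.quasipositive).inv_conj (sigma 4 1)
  · exact quasipositive_band le_rfl (by norm_num) (by norm_num)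
  · exact hβ''.quasipositive.inv_conj _
  · exact quasipositive_band (by norm_num) (by norm_num) le_rfl
end

section
/- In B_4, if R is a (possibly empty) product of the band generators σ_{2,3}, σ_{3,4}, σ_{2,4} and s ≥ 0 is an integer, then the braid σ_{1,3}^{−1} σ_{2,4} R σ_{1,4}^{s} is conjugate in B_4 to σ_{2,4} R σ_{1,3}^{−1} σ_{3,4}^{s}. -/
private lemma sigma_mk (i : ℕ) (h : 1 ≤ i ∧ i ≤ 3) :
    sigma 4 i = PresentedGroup.mk (braidRels 4) (FreeGroup.of ⟨i - 1, by omega⟩) := by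
  rw [sigma, dif_pos ⟨h.1, h.2⟩]; rfl

private lemma braid_rel_one {r : FreeGroup (Fin 3)} (h : r ∈ braidRels 4) :
    PresentedGroup.mk (braidRels 4) r = 1 :=
  (QuotientGroup.eq_one_iff _).mpr (Subgroup.subset_normalClosure h)

private lemma braid13 : sigma 4 1 * sigma 4 3 = sigma 4 3 * sigma 4 1 := by
  have h1 := braid_rel_one (Or.inl ⟨⟨0, by omega⟩, ⟨2, by omega⟩, by norm_num, rfl⟩)
  rw [map_mul, map_mul, map_mul, map_inv, map_inv, mul_inv_eq_one, mul_inv_eq_iff_eq_mul] at h1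
  rw [sigma_mk 1 (by omega), sigma_mk 3 (by omega)]
  exact h1

private lemma braid_adj (i : ℕ) (h : 1 ≤ i ∧ i ≤ 2) :
    sigma 4 i * sigma 4 (i+1) * sigma 4 i = sigma 4 (i+1) * sigma 4 i * sigma 4 (i+1) := by
  have h1 := braid_rel_one
    (Or.inr ⟨⟨i - 1, by omega⟩, ⟨i, by omega⟩, by simp only [Fin.val_mk]; omega, rfl⟩)
  rw [map_mul, map_mul, map_inv, map_mul, map_mul, mul_inv_eq_one] at h1
  rw [sigma_mk i (by omega), sigma_mk (i+1) (by omega)]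
  simpa using h1

private lemma band13_eq : band 4 1 3 = sigma 4 2 * sigma 4 1 * (sigma 4 2)⁻¹ := by
  have : bandConj 4 1 3 = sigma 4 2 := by
    show ((List.range 1).map fun t => sigma 4 (2 - t)).prod = _
    simp [List.range_succ]
  rw [band, this]

private lemma band14_eq : band 4 1 4 = sigma 4 3 * sigma 4 2 * sigma 4 1 * (sigma 4 3 * sigma 4 2)⁻¹ := by
  have : bandConj 4 1 4 = sigma 4 3 * sigma 4 2 := by
    show ((List.range 2).map fun t => sigma 4 (3 - t)).prod = _
    simp [List.range_succ]
  rw [band, this, mul_assoc (sigma 4 3)]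

private lemma band34_eq : band 4 3 4 = sigma 4 3 := by
  have : bandConj 4 3 4 = 1 := rfl
  rw [band, this]; group

private lemma key : band 4 1 3 * band 4 1 4 = sigma 4 3 * band 4 1 3 := by
  rw [band13_eq, band14_eq]
  set x := sigma 4 1 with hx
  set y := sigma 4 2 with hy
  set z := sigma 4 3 with hz
  have A : x * z = z * x := braid13
  have B : x * y * x = y * x * y := braid_adj 1 (by omega)
  have C : y * z * y = z * y * z := braid_adj 2 (by omega)
  have Ainv : z⁻¹ * x = x * z⁻¹ := by
    calc z⁻¹ * x = z⁻¹ * (x * z) * z⁻¹ := by group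
    _ = z⁻¹ * (z * x) * z⁻¹ := by rw [A]
    _ = x * z⁻¹ := by group
  have conj23 : y⁻¹ * z * y = z * y * z⁻¹ := by
    calc y⁻¹ * z * y = y⁻¹ * (z * y * z) * z⁻¹ := by group
    _ = y⁻¹ * (y * z * y) * z⁻¹ := by rw [C]
    _ = z * y * z⁻¹ := by group
  have D : y * (z⁻¹ * y⁻¹ * z⁻¹) = z⁻¹ * y⁻¹ := by
    calc y * (z⁻¹ * y⁻¹ * z⁻¹) = y * (z * y * z)⁻¹ := by group
    _ = y * (y * z * y)⁻¹ := by rw [C]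
    _ = z⁻¹ * y⁻¹ := by group
  calc y * x * y⁻¹ * (z * y * x * (z * y)⁻¹)
      = y * x * (y⁻¹ * z * y) * x * y⁻¹ * z⁻¹ := by group
    _ = y * x * (z * y * z⁻¹) * x * y⁻¹ * z⁻¹ := by rw [conj23]
    _ = y * (x * z) * y * (z⁻¹ * x) * y⁻¹ * z⁻¹ := by group
    _ = y * (z * x) * y * (x * z⁻¹) * y⁻¹ * z⁻¹ := by rw [A, Ainv]
    _ = y * z * (x * y * x) * z⁻¹ * y⁻¹ * z⁻¹ := by group
    _ = y * z * (y * x * y) * z⁻¹ * y⁻¹ * z⁻¹ := by rw [B]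
    _ = y * z * y * x * (y * (z⁻¹ * y⁻¹ * z⁻¹)) := by group
    _ = y * z * y * x * (z⁻¹ * y⁻¹) := by rw [D]
    _ = (y * z * y) * (x * z⁻¹) * y⁻¹ := by group
    _ = (z * y * z) * (z⁻¹ * x) * y⁻¹ := by rw [C, ← Ainv]
    _ = z * (y * x * y⁻¹) := by group


/-- In `B₄`, for `R` a product of the band generators `σ_{2,3}, σ_{3,4}, σ_{2,4}` and `s ≥ 0`,
the braid `σ_{1,3}⁻¹ σ_{2,4} R σ_{1,4}^s` is conjugate to `σ_{2,4} R σ_{1,3}⁻¹ σ_{3,4}^s`. -/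
theorem destabilizable_conjugate (R : BraidGroup 4)
    (hR : R ∈ Submonoid.closure {band 4 2 3, band 4 3 4, band 4 2 4}) (s : ℕ) :
    ∃ α : BraidGroup 4,
      α * ((band 4 1 3)⁻¹ * band 4 2 4 * R * band 4 1 4 ^ s) * α⁻¹ =
        band 4 2 4 * R * (band 4 1 3)⁻¹ * band 4 3 4 ^ s := by
  refine ⟨band 4 1 3, ?_⟩
  have hc : band 4 1 4 = (band 4 1 3)⁻¹ * (sigma 4 3 * band 4 1 3) := by
    rw [← key]; group
  have hcs : band 4 1 4 ^ s = (band 4 1 3)⁻¹ * sigma 4 3 ^ s * band 4 1 3 := by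
    rw [hc, show (band 4 1 3)⁻¹ * (sigma 4 3 * band 4 1 3) =
      (band 4 1 3)⁻¹ * sigma 4 3 * ((band 4 1 3)⁻¹)⁻¹ from by group, conj_pow, inv_inv]
  rw [band34_eq, hcs]
  group
end
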